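/- The category FPCM of trace monoids and basic homomorphisms has all (small) products. In particular, the product of a family {M(Eⱼ, Iⱼ)}_{j∈J} is the trace monoid M(E, I) where E = (∏ⱼ Eⱼ₊) \ {(*)} (the Cartesian product of pointed sets Eⱼ₊ = Eⱼ ⊔ {*} minus the all-* family) and I is obtained from the product of the commutativity relations Tⱼ = Iⱼ ∪ Δ_{Eⱼ₊} ∪ (Eⱼ × {*}) ∪ ({*} × Eⱼ) by removing the diagonal and all pairs involving (*). -/

import Mathlib

open CategoryTheory

/-- The elementary commutation relation on words generated by an independence relation. -/
def traceRel (E : Type) (I : Set (E × E)) : FreeMonoid E → FreeMonoid E → Prop :=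
  fun x y => ∃ a b : E, (a, b) ∈ I ∧ x = FreeMonoid.of a * FreeMonoid.of b ∧
    y = FreeMonoid.of b * FreeMonoid.of a

/-- The congruence on the free monoid generated by commutation of independent pairs. -/
def traceCon (E : Type) (I : Set (E × E)) : Con (FreeMonoid E) := conGen (traceRel E I)

/-- The trace monoid `M(E,I)`. -/
abbrev TraceMonoid (E : Type) (I : Set (E × E)) : Type := (traceCon E I).Quotient

/-- The canonical projection from words to traces. -/
def trcMk {E : Type} {I : Set (E × E)} : FreeMonoid E →* TraceMonoid E I :=
  (traceCon E I).mk'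

/-- The generator of the trace monoid corresponding to an event `e`. -/
def trc {E : Type} {I : Set (E × E)} (e : E) : TraceMonoid E I :=
  trcMk (FreeMonoid.of e)

/-- `I` is an independence relation: irreflexive and symmetric. -/
structure IsIndep {E : Type} (I : Set (E × E)) : Prop where
  irrefl : ∀ a : E, (a, a) ∉ I
  symm : ∀ a b : E, (a, b) ∈ I → (b, a) ∈ I

/-- A homomorphism of trace monoids is basic if it sends generators to generators or to `1`. -/
def IsBasic {E E' : Type} {I : Set (E × E)} {I' : Set (E' × E')}
    (f : TraceMonoid E I →* TraceMonoid E' I') : Prop :=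
  ∀ e : E, (∃ e' : E', f (trc e) = trc e') ∨ f (trc e) = 1

/-- A basic homomorphism preserves independence. -/
def IsIndepPres {E E' : Type} {I : Set (E × E)} {I' : Set (E' × E')}
    (f : TraceMonoid E I →* TraceMonoid E' I') : Prop :=
  ∀ a b : E, (a, b) ∈ I → f (trc a) ≠ f (trc b) ∨ (f (trc a) = 1 ∧ f (trc b) = 1)

/-- The monoid homomorphism out of a trace monoid induced by a map on generators whose
images commute at independent pairs. -/
def liftHom {E : Type} {I : Set (E × E)} {N : Type*} [Monoid N] (φ : E → N)
    (hφ : ∀ a b : E, (a, b) ∈ I → φ a * φ b = φ b * φ a) : TraceMonoid E I →* N :=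
  (traceCon E I).lift (FreeMonoid.lift φ) (by
    apply Con.conGen_le.2
    rintro x y ⟨a, b, hab, rfl, rfl⟩
    rw [Con.ker_rel]
    simp only [map_mul, FreeMonoid.lift_eval_of]
    exact hφ a b hab)

@[simp] theorem liftHom_trc {E : Type} {I : Set (E × E)} {N : Type*} [Monoid N] (φ : E → N)
    (hφ : ∀ a b : E, (a, b) ∈ I → φ a * φ b = φ b * φ a) (e : E) :
    liftHom φ hφ (trc (I := I) e) = φ e := by
  show (traceCon E I).lift _ _ ((traceCon E I).mk' (FreeMonoid.of e)) = φ e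
  exact FreeMonoid.lift_eval_of ..

theorem trc_comm {E : Type} {I : Set (E × E)} {a b : E} (h : (a, b) ∈ I) :
    (trc a : TraceMonoid E I) * trc b = trc b * trc a := by
  show trcMk (FreeMonoid.of a) * trcMk (FreeMonoid.of b) =
    trcMk (FreeMonoid.of b) * trcMk (FreeMonoid.of a)
  rw [← map_mul, ← map_mul]
  exact (Con.eq _).2 (ConGen.Rel.of _ _ ⟨a, b, h, rfl, rfl⟩)

theorem isBasic_id {E : Type} {I : Set (E × E)} :
    IsBasic (MonoidHom.id (TraceMonoid E I)) := fun e => Or.inl ⟨e, rfl⟩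

theorem isBasic_comp {E₁ E₂ E₃ : Type} {I₁ : Set (E₁ × E₁)} {I₂ : Set (E₂ × E₂)}
    {I₃ : Set (E₃ × E₃)} {f : TraceMonoid E₁ I₁ →* TraceMonoid E₂ I₂}
    {g : TraceMonoid E₂ I₂ →* TraceMonoid E₃ I₃} (hf : IsBasic f) (hg : IsBasic g) :
    IsBasic (g.comp f) := by
  intro e
  rcases hf e with ⟨e', he⟩ | he
  · rcases hg e' with ⟨e'', he''⟩ | he''
    · exact Or.inl ⟨e'', by simp [MonoidHom.comp_apply, he, he'']⟩
    · exact Or.inr (by simp [MonoidHom.comp_apply, he, he''])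
  · exact Or.inr (by simp [MonoidHom.comp_apply, he])
/-- An object of the category `FPCM`: a set of events with an independence relation. -/
structure FPCMObj where
  E : Type
  I : Set (E × E)
  indep : IsIndep I

/-- The category `FPCM` of trace monoids and basic homomorphisms. -/
instance : Category FPCMObj where
  Hom X Y := {f : TraceMonoid X.E X.I →* TraceMonoid Y.E Y.I // IsBasic f}
  id _ := ⟨MonoidHom.id _, isBasic_id⟩
  comp f g := ⟨g.1.comp f.1, isBasic_comp f.2 g.2⟩
  id_comp _ := Subtype.ext (MonoidHom.comp_id _)
  comp_id _ := Subtype.ext (MonoidHom.id_comp _)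
  assoc _ _ _ := Subtype.ext rfl

/-- An object of the category `ComRel`: a pointed set `E ⊔ {*}` (modelled as `Option E` with
point `none`) together with a reflexive symmetric commutativity relation containing all
pairs with the point. -/
structure ComRelObj where
  E : Type
  T : Set (Option E × Option E)
  refl : ∀ a : Option E, (a, a) ∈ T
  symm : ∀ a b : Option E, (a, b) ∈ T → (b, a) ∈ T
  star_left : ∀ a : Option E, ((none : Option E), a) ∈ T
  star_right : ∀ a : Option E, (a, (none : Option E)) ∈ T

/-- The category `ComRel` of pointed sets with commutativity relations and pointed
relation-preserving maps. -/
instance : Category ComRelObj where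
  Hom X Y := {φ : Option X.E → Option Y.E //
    φ none = none ∧ ∀ a b : Option X.E, (a, b) ∈ X.T → (φ a, φ b) ∈ Y.T}
  id _ := ⟨id, rfl, fun _ _ h => h⟩
  comp f g := ⟨g.1 ∘ f.1, by simp [f.2.1, g.2.1], fun a b h => g.2.2 _ _ (f.2.2 _ _ h)⟩
  id_comp _ := Subtype.ext rfl
  comp_id _ := Subtype.ext rfl
  assoc _ _ _ := Subtype.ext rfl

/-- The commutativity relation `T = I ∪ (E × {*}) ∪ ({*} × E) ∪ Δ` associated to an
independence relation `I`. -/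
def comRelOf (X : FPCMObj) : ComRelObj where
  E := X.E
  T := {p | p.1 = p.2 ∨ p.1 = none ∨ p.2 = none ∨
        ∃ a b : X.E, (a, b) ∈ X.I ∧ p = (some a, some b)}
  refl _ := Or.inl rfl
  symm a b h := by
    rcases h with h | h | h | ⟨x, y, hxy, h⟩
    · exact Or.inl h.symm
    · exact Or.inr (Or.inr (Or.inl h))
    · exact Or.inr (Or.inl h)
    · refine Or.inr (Or.inr (Or.inr ⟨y, x, X.indep.symm _ _ hxy, ?_⟩))
      obtain ⟨h1, h2⟩ := Prod.mk.injEq .. ▸ h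
      simp_all
  star_left _ := Or.inr (Or.inl rfl)
  star_right _ := Or.inr (Or.inr (Or.inl rfl))

open CategoryTheory.Limits

/-- The explicit product of a family of trace monoids in `FPCM`: the generators are the
families in `∏ⱼ (Eⱼ ⊔ {*})` other than the all-`*` family, and the independence relation is
obtained from the product of the commutativity relations by removing the diagonal. -/
def prodFPCMObj (J : Type) (d : J → FPCMObj) : FPCMObj where
  E := {x : ∀ j : J, Option (d j).E // x ≠ fun _ => none}
  I := {p | p.1 ≠ p.2 ∧ ∀ j : J, (p.1.val j, p.2.val j) ∈ (comRelOf (d j)).T}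
  indep :=
    { irrefl := fun a h => h.1 rfl
      symm := fun a b h => ⟨fun e => h.1 e.symm, fun j => (comRelOf (d j)).symm _ _ (h.2 j)⟩ }

/-!
A basic homomorphism `M(E, I) → M(E', I')` is the same as a pointed map `E₊ → E'₊` sending
independent pairs into the commutativity relation `T'`, because two generators of a trace
monoid commute iff they are equal or independent. Hence a cone over `{M(Eⱼ, Iⱼ)}` sends each
generator to a family in `∏ⱼ Eⱼ₊`, that is to a generator of the product or to `1`, and
independent generators to families that are coordinatewise in the `Tⱼ`, which commute in the
product. The mediating map is unique because a generator of the product, or `1`, is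
determined by its projections.
-/

section TraceMonoid

variable {E : Type} {I : Set (E × E)}

def letterCount : TraceMonoid E I →* Multiplicative (Multiset E) :=
  liftHom (fun e => Multiplicative.ofAdd {e}) fun _ _ _ => mul_comm _ _

theorem trc_injective : Function.Injective (trc : E → TraceMonoid E I) := fun a b h => by
  simpa [letterCount] using congrArg (letterCount (I := I)) h

theorem trc_ne_one (a : E) : (trc a : TraceMonoid E I) ≠ 1 := fun h => by
  simpa [letterCount] using congrArg (letterCount (I := I)) h

theorem traceHom_ext {N : Type*} [Monoid N] {f g : TraceMonoid E I →* N}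
    (h : ∀ e : E, f (trc e) = g (trc e)) : f = g :=
  Con.hom_ext (FreeMonoid.hom_eq h)

theorem eq_or_mem_of_commute_trc (hsymm : ∀ a b : E, (a, b) ∈ I → (b, a) ∈ I) {a b : E}
    (h : Commute (trc a : TraceMonoid E I) (trc b)) : a = b ∨ (a, b) ∈ I := by
  classical
  by_contra! ⟨hne, hab⟩
  -- erase every other letter and look at the resulting words `ab` and `ba`
  let φ : E → FreeMonoid E := fun e => if e = a ∨ e = b then FreeMonoid.of e else 1
  have hφ : ∀ x y : E, (x, y) ∈ I → φ x * φ y = φ y * φ x := by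
    intro x y hxy
    by_cases hx : x = a ∨ x = b
    · by_cases hy : y = a ∨ y = b
      · rcases hx with rfl | rfl <;> rcases hy with rfl | rfl
        exacts [rfl, absurd hxy hab, absurd (hsymm _ _ hxy) hab, rfl]
      · simp [φ, hy]
    · simp [φ, hx]
  have hw := congrArg (fun t => FreeMonoid.toList (liftHom φ hφ t)) h.eq
  simp [φ] at hw
  exact hne hw.1

/-- The generators of `M(E, I)` together with `1`, indexed by `E₊ = Option E` with `* = none`. -/
def optTrc (o : Option E) : TraceMonoid E I := o.elim 1 trc

theorem optTrc_injective : Function.Injective (optTrc : Option E → TraceMonoid E I) := by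
  rintro (_ | a) (_ | b) h
  · rfl
  · exact absurd h.symm (trc_ne_one b)
  · exact absurd h (trc_ne_one a)
  · exact congrArg some (trc_injective h)

theorem isBasic_iff_forall_exists_optTrc {E' : Type} {I' : Set (E' × E')}
    {f : TraceMonoid E I →* TraceMonoid E' I'} :
    IsBasic f ↔ ∀ e : E, ∃ o : Option E', f (trc e) = optTrc o := by
  refine forall_congr' fun e => ⟨?_, ?_⟩
  · rintro (⟨e', he⟩ | he)
    exacts [⟨some e', he⟩, ⟨none, he⟩]
  · rintro ⟨_ | e', he⟩
    exacts [Or.inr he, Or.inl ⟨e', he⟩]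

end TraceMonoid

theorem commute_optTrc_iff (X : FPCMObj) {x y : Option X.E} :
    Commute (optTrc x : TraceMonoid X.E X.I) (optTrc y) ↔ (x, y) ∈ (comRelOf X).T := by
  change _ ↔ x = y ∨ x = none ∨ y = none ∨ ∃ a b, (a, b) ∈ X.I ∧ (x, y) = (some a, some b)
  constructor
  · rcases x with _ | a
    · exact fun _ => Or.inr (Or.inl rfl)
    rcases y with _ | b
    · exact fun _ => Or.inr (Or.inr (Or.inl rfl))
    intro h
    rcases eq_or_mem_of_commute_trc X.indep.symm h with rfl | hab
    exacts [Or.inl rfl, Or.inr (Or.inr (Or.inr ⟨a, b, hab, rfl⟩))]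
  · rintro (rfl | rfl | rfl | ⟨a, b, hab, hxy⟩)
    · exact .refl _
    · exact .one_left _
    · exact .one_right _
    · cases hxy
      exact trc_comm hab

section Basic

variable {E E' : Type} {I : Set (E × E)} {I' : Set (E' × E')}
  {f : TraceMonoid E I →* TraceMonoid E' I'}

noncomputable def IsBasic.genMap (hf : IsBasic f) (e : E) : Option E' :=
  (isBasic_iff_forall_exists_optTrc.1 hf e).choose

theorem IsBasic.optTrc_genMap (hf : IsBasic f) (e : E) : optTrc (hf.genMap e) = f (trc e) :=
  (isBasic_iff_forall_exists_optTrc.1 hf e).choose_spec.symm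

end Basic

theorem IsBasic.genMap_mem_comRelOf {E : Type} {I : Set (E × E)} {Y : FPCMObj}
    {f : TraceMonoid E I →* TraceMonoid Y.E Y.I} (hf : IsBasic f) {a b : E} (hab : (a, b) ∈ I) :
    (hf.genMap a, hf.genMap b) ∈ (comRelOf Y).T := by
  rw [← commute_optTrc_iff, hf.optTrc_genMap, hf.optTrc_genMap]
  exact Commute.map (trc_comm hab) f

section Product

variable {J : Type} {d : J → FPCMObj}

/-- A generator of the product, or `*`, is the same as an arbitrary family in `∏ⱼ (Eⱼ ⊔ {*})`,
with `*` the all-`*` family. -/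
noncomputable def prodCoords : Option (prodFPCMObj J d).E ≃ ∀ j, Option (d j).E :=
  open scoped Classical in Equiv.optionSubtypeNe _

def prodProj (j : J) :
    TraceMonoid (prodFPCMObj J d).E (prodFPCMObj J d).I →* TraceMonoid (d j).E (d j).I :=
  liftHom (fun x => optTrc (x.val j)) fun _ _ hxy => (commute_optTrc_iff (d j)).2 (hxy.2 j)

theorem prodProj_optTrc (j : J) (o : Option (prodFPCMObj J d).E) :
    prodProj j (optTrc o) = optTrc (prodCoords o j) := by
  rcases o with _ | x
  exacts [map_one _, liftHom_trc ..]

theorem isBasic_prodProj (j : J) : IsBasic (prodProj (d := d) j) :=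
  isBasic_iff_forall_exists_optTrc.2 fun x => ⟨x.val j, prodProj_optTrc j (some x)⟩

theorem eq_of_forall_prodProj_optTrc_eq {o o' : Option (prodFPCMObj J d).E}
    (h : ∀ j, prodProj j (optTrc o) = prodProj j (optTrc o')) : o = o' :=
  prodCoords.injective <| funext fun j => optTrc_injective <| by
    simpa only [prodProj_optTrc] using h j

theorem commute_optTrc_of_forall_mem {o o' : Option (prodFPCMObj J d).E}
    (h : ∀ j, (prodCoords o j, prodCoords o' j) ∈ (comRelOf (d j)).T) :
    Commute (optTrc o : TraceMonoid (prodFPCMObj J d).E (prodFPCMObj J d).I) (optTrc o') := by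
  rcases o with _ | x
  · exact .one_left _
  rcases o' with _ | y
  · exact .one_right _
  rcases eq_or_ne x y with rfl | hxy
  · exact .refl _
  · exact trc_comm ⟨hxy, h⟩

variable {E : Type} {I : Set (E × E)} {f : ∀ j, TraceMonoid E I →* TraceMonoid (d j).E (d j).I}

noncomputable def prodLift (hf : ∀ j, IsBasic (f j)) :
    TraceMonoid E I →* TraceMonoid (prodFPCMObj J d).E (prodFPCMObj J d).I :=
  liftHom (fun e => optTrc (prodCoords.symm fun j => (hf j).genMap e)) fun _ _ hab =>
    commute_optTrc_of_forall_mem fun j => by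
      simpa only [Equiv.apply_symm_apply] using (hf j).genMap_mem_comRelOf hab

theorem prodLift_trc (hf : ∀ j, IsBasic (f j)) (e : E) :
    prodLift hf (trc e) = optTrc (prodCoords.symm fun j => (hf j).genMap e) :=
  liftHom_trc ..

theorem isBasic_prodLift (hf : ∀ j, IsBasic (f j)) : IsBasic (prodLift hf) :=
  isBasic_iff_forall_exists_optTrc.2 fun e => ⟨_, prodLift_trc hf e⟩

theorem prodProj_comp_prodLift (hf : ∀ j, IsBasic (f j)) (j : J) :
    (prodProj j).comp (prodLift hf) = f j :=
  traceHom_ext fun e => by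
    rw [MonoidHom.comp_apply, prodLift_trc, prodProj_optTrc, Equiv.apply_symm_apply,
      (hf j).optTrc_genMap]

theorem eq_prodLift (hf : ∀ j, IsBasic (f j)) {m : TraceMonoid E I →* _} (hm : IsBasic m)
    (hmf : ∀ j, (prodProj j).comp m = f j) : m = prodLift hf :=
  traceHom_ext fun e => by
    obtain ⟨o, ho⟩ := isBasic_iff_forall_exists_optTrc.1 hm e
    rw [ho, prodLift_trc]
    congr 1
    refine eq_of_forall_prodProj_optTrc_eq fun j => ?_
    rw [← ho, ← prodLift_trc hf]
    exact DFunLike.congr_fun ((hmf j).trans (prodProj_comp_prodLift hf j).symm) (trc e)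

end Product

def prodFan (J : Type) (d : J → FPCMObj) : Fan d :=
  Fan.mk (prodFPCMObj J d) fun j => ⟨prodProj j, isBasic_prodProj j⟩

noncomputable def prodFanIsLimit (J : Type) (d : J → FPCMObj) : IsLimit (prodFan J d) :=
  Fan.IsLimit.mk _ (fun s => ⟨prodLift fun j => (s.proj j).2, isBasic_prodLift _⟩)
    (fun _ j => Subtype.ext (prodProj_comp_prodLift _ j))
    (fun _ m hm => Subtype.ext (eq_prodLift _ m.2 fun j => congrArg Subtype.val (hm j)))

/-- The category `FPCM` has all small products, and the product of a family
`{M(Eⱼ,Iⱼ)}` is the explicitly described trace monoid. -/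
theorem fpcm_hasProducts :
    HasProducts.{0} FPCMObj ∧
      ∀ (J : Type) (d : J → FPCMObj),
        ∃ c : Fan d, c.pt = prodFPCMObj J d ∧ Nonempty (IsLimit c) :=
  ⟨hasProducts_of_limit_fans (prodFan _) (prodFanIsLimit _),
    fun J d => ⟨prodFan J d, rfl, ⟨prodFanIsLimit J d⟩⟩⟩
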